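/- arXiv:1405.1650 — 3 statements merged into one kernel-verified Lean document; each statement's English description precedes it below -/
import Mathlib

section
/- Let l, ε, c be positive real numbers and let h be a real number such that cosh(h − l) ≥ e^l · l² / ε² and c · cosh(h − l) < l. Then c · cosh(h/2) < ε. (Geometric meaning: in a hyperbolic quadrilateral with base of length c on a geodesic, two legs of length h orthogonal to the base, and top side of length l, if h exceeds l + arcosh(e^l l²/ε²) then the equidistant curve at height h/2 joining the midpoints of the legs is shorter than ε, since its length equals c·cosh(h/2).) -/
/-- If cosh(h − l) ≥ e^l·l²/ε² and c·cosh(h − l) < l, then the equidistant curve at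
height h/2, of length c·cosh(h/2), is shorter than ε. -/
theorem midlevel_curve_short (l ε c h : ℝ)
    (hl : 0 < l) (hε : 0 < ε) (hc : 0 < c)
    (h1 : Real.cosh (h - l) ≥ Real.exp l * l ^ 2 / ε ^ 2)
    (h2 : c * Real.cosh (h - l) < l) :
    c * Real.cosh (h / 2) < ε := by
  have hch : 0 < Real.cosh (h - l) := Real.cosh_pos (h - l)
  have hel : 0 < Real.exp l := Real.exp_pos l
  -- cosh h = 2 cosh(h/2)^2 − 1
  have hdouble : Real.cosh h = 2 * Real.cosh (h / 2) ^ 2 - 1 := by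
    have := Real.cosh_two_mul (h / 2)
    rw [show 2 * (h / 2) = h by ring] at this
    linarith [Real.sinh_sq (h / 2)]
  -- cosh h ≤ e^l cosh(h−l)
  have hadd : Real.cosh h = Real.cosh (h - l) * Real.cosh l +
      Real.sinh (h - l) * Real.sinh l := by
    have := Real.cosh_add (h - l) l
    rw [show h - l + l = h by ring] at this
    exact this
  have hsc : Real.sinh (h - l) ≤ Real.cosh (h - l) := by
    nlinarith [Real.cosh_sub_sinh (h - l), Real.exp_pos (-(h - l))]
  have hsl : 0 ≤ Real.sinh l := Real.sinh_nonneg_iff.mpr hl.le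
  have hcsl : Real.cosh l + Real.sinh l = Real.exp l := Real.cosh_add_sinh l
  have hclpos : 0 < Real.cosh l := Real.cosh_pos l
  have hbound : Real.cosh h ≤ Real.exp l * Real.cosh (h - l) := by
    rw [hadd, ← hcsl]
    nlinarith
  -- e^l cosh(h-l) ≥ 1
  have hone : 1 ≤ Real.exp l * Real.cosh (h - l) := by
    nlinarith [Real.one_le_exp hl.le, Real.one_le_cosh (h - l)]
  have hsq : Real.cosh (h / 2) ^ 2 ≤ Real.exp l * Real.cosh (h - l) := by
    nlinarith
  -- c < ε²/(e^l l)
  have h1' : Real.exp l * l ^ 2 ≤ ε ^ 2 * Real.cosh (h - l) := by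
    have := (div_le_iff₀ (by positivity : (0:ℝ) < ε ^ 2)).mp h1
    linarith
  have hcle : c * Real.exp l * l < ε ^ 2 := by
    have : c * (Real.exp l * l ^ 2) ≤ c * (ε ^ 2 * Real.cosh (h - l)) := by
      exact mul_le_mul_of_nonneg_left h1' hc.le
    nlinarith [mul_lt_mul_of_pos_left h2 (by positivity : (0:ℝ) < ε ^ 2)]
  have hfin : (c * Real.cosh (h / 2)) ^ 2 < ε ^ 2 := by
    have : c ^ 2 * Real.cosh (h / 2) ^ 2 ≤ c ^ 2 * (Real.exp l * Real.cosh (h - l)) :=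
      mul_le_mul_of_nonneg_left hsq (by positivity)
    nlinarith [mul_lt_mul_of_pos_left h2 (by positivity : (0:ℝ) < c * Real.exp l)]
  have hpos : 0 < c * Real.cosh (h / 2) := by positivity
  nlinarith [hfin, hpos, hε]
end

section
/- For every real number s with 0 < s ≤ 1 and every real number h ≥ 0, one has arsinh(s · sinh(h/2)) ≤ (1/2) · arsinh(s · sinh h). Equivalently: if a, b ≥ 0 satisfy sinh a = s·sinh h and sinh b = s·sinh(h/2), then b ≤ a/2. -/
/-- For 0 < s ≤ 1 and h ≥ 0, arsinh(s·sinh(h/2)) ≤ (1/2)·arsinh(s·sinh h):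
the midpoint of a geodesic segment meeting a geodesic at angle α (s = sin α)
is at distance from the geodesic at most half the distance of the endpoint. -/
theorem arsinh_half_bound (s h : ℝ) (hs0 : 0 < s) (hs1 : s ≤ 1) (hh : 0 ≤ h) :
    Real.arsinh (s * Real.sinh (h / 2)) ≤ (1 / 2) * Real.arsinh (s * Real.sinh h) := by
  have hsh : 0 ≤ Real.sinh (h / 2) := by simpa using Real.sinh_le_sinh.2 (show (0:ℝ) ≤ h/2 by linarith)
  have key : Real.sinh (2 * Real.arsinh (s * Real.sinh (h / 2))) ≤ s * Real.sinh h := by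
    rw [Real.sinh_two_mul, Real.sinh_arsinh, Real.cosh_arsinh]
    have hsinh : Real.sinh h = 2 * Real.sinh (h / 2) * Real.cosh (h / 2) := by
      rw [← Real.sinh_two_mul]; ring_nf
    rw [hsinh]
    have hch : Real.cosh (h / 2) = Real.sqrt (1 + Real.sinh (h / 2) ^ 2) := by
      rw [← Real.sqrt_sq (Real.cosh_pos (h / 2)).le, Real.cosh_sq]
      ring_nf
    have h1 : Real.sqrt (1 + (s * Real.sinh (h / 2)) ^ 2) ≤ Real.cosh (h / 2) := by
      rw [hch]
      apply Real.sqrt_le_sqrt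
      nlinarith [sq_nonneg (Real.sinh (h / 2)), mul_nonneg (sub_nonneg.2 hs1) (by linarith : (0:ℝ) ≤ 1 + s), sq_nonneg (Real.sinh (h / 2) * (1 - s))]
    have h2 : 0 ≤ s * Real.sinh (h / 2) := by positivity
    nlinarith [Real.sqrt_nonneg (1 + (s * Real.sinh (h / 2)) ^ 2)]
  have := Real.arsinh_le_arsinh.2 key
  rw [Real.arsinh_sinh] at this
  linarith
end

section
/- Let c, p, m be positive real numbers (c = l_O, p = l⁺, m = l⁻), let x ≥ 0 and t be real numbers. If m < c · cosh(x) and c · cosh(x + t − p) < p, then t < p + log(2p/m). -/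
/-- Analytic core of the Situation-2 bound: if m < c·cosh x and
c·cosh(x + t − p) < p, then t < p + log(2p/m). -/
theorem situation_two_bound (c p m x t : ℝ)
    (hc : 0 < c) (hp : 0 < p) (hm : 0 < m) (hx : 0 ≤ x)
    (h1 : m < c * Real.cosh x)
    (h2 : c * Real.cosh (x + t - p) < p) :
    t < p + Real.log (2 * p / m) := by
  have hcosh1 : Real.cosh x ≤ Real.exp x := by
    rw [Real.cosh_eq]
    have : Real.exp (-x) ≤ Real.exp x := Real.exp_le_exp.2 (by linarith)
    linarith
  have hm1 : m < c * Real.exp x := lt_of_lt_of_le h1 (by nlinarith)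
  have hcosh2 : Real.exp (x + t - p) / 2 ≤ Real.cosh (x + t - p) := by
    rw [Real.cosh_eq]
    have := (Real.exp_pos (-(x + t - p))).le
    linarith
  have h2' : c * Real.exp (x + t - p) < 2 * p := by nlinarith
  have hxs : Real.exp (x + t - p) = Real.exp x * Real.exp (t - p) := by
    rw [← Real.exp_add]; ring_nf
  have key : Real.exp (t - p) < 2 * p / m := by
    rw [lt_div_iff₀ hm]
    have hep := (Real.exp_pos (t - p)).le
    nlinarith [Real.exp_pos x]
  have : t - p < Real.log (2 * p / m) :=
    (Real.lt_log_iff_exp_lt (by positivity)).2 key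
  linarith
end
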